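/- Let h be the analytic function on the upper half plane given by h(z) = (∏_{k=0}^∞ sin(πb⁻¹a⁻ᵏ(iaᵏ−z))/sin(πb⁻¹a⁻ᵏ(iaᵏ+z))) · (∏_{m=1}^∞ e^{2π/b} sin(πb⁻¹aᵐ(z−ia⁻ᵐ))/sin(πb⁻¹aᵐ(z+ia⁻ᵐ))) for a > 1, b > 0. Then h vanishes exactly on Γ(a,b) = {aᵐ(bk+i) : m,k ∈ ℤ} and satisfies the quasi-periodicity h(az) = −e^{−2π/b} h(z). -/

import Mathlib

open Complex Real

/-- The analytic function associated to the hyperbolic lattice `Γ(a,b)`. -/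
noncomputable def latticeH (a b : ℝ) (z : ℂ) : ℂ :=
  (∏' k : ℕ, Complex.sin (Real.pi * b⁻¹ * (a : ℂ) ^ (-(k : ℤ)) * (Complex.I * (a : ℂ) ^ (k : ℤ) - z)) /
      Complex.sin (Real.pi * b⁻¹ * (a : ℂ) ^ (-(k : ℤ)) * (Complex.I * (a : ℂ) ^ (k : ℤ) + z))) *
  (∏' m : ℕ, Complex.exp (2 * Real.pi / b) *
      Complex.sin (Real.pi * b⁻¹ * (a : ℂ) ^ ((m : ℤ) + 1) * (z - Complex.I * (a : ℂ) ^ (-((m : ℤ) + 1)))) /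
      Complex.sin (Real.pi * b⁻¹ * (a : ℂ) ^ ((m : ℤ) + 1) * (z + Complex.I * (a : ℂ) ^ (-((m : ℤ) + 1)))))


open Filter Topology



noncomputable def lhF (b : ℝ) (t : ℝ) (z : ℂ) : ℂ :=
  Complex.sin ((↑(Real.pi * b⁻¹):ℂ) * (Complex.I - (t:ℂ)*z)) /
    Complex.sin ((↑(Real.pi * b⁻¹):ℂ) * (Complex.I + (t:ℂ)*z))

noncomputable def lhQ (b : ℝ) (t : ℝ) (z : ℂ) : ℂ :=
  -(Complex.exp (2*Real.pi/b) * lhF b t z)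

lemma lh_sin_shift (r : ℝ) (w : ℂ) :
    Complex.sin ((r:ℂ)*Complex.I + w) =
      (Complex.exp (r:ℂ) * Complex.exp (-(w*Complex.I))
        - Complex.exp (-(r:ℂ)) * Complex.exp (w*Complex.I)) * Complex.I / 2 := by
  have h1 : -((r:ℂ)*Complex.I + w) * Complex.I = (r:ℂ) + -(w*Complex.I) := by
    linear_combination (-(r:ℂ)) * Complex.I_mul_I
  have h2 : ((r:ℂ)*Complex.I + w) * Complex.I = -(r:ℂ) + w*Complex.I := by
    linear_combination (r:ℂ) * Complex.I_mul_I
  rw [Complex.sin, h1, h2, Complex.exp_add, Complex.exp_add]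

lemma lh_norm_exp_mul_I (w : ℂ) : ‖Complex.exp (w * Complex.I)‖ = Real.exp (-w.im) := by
  rw [Complex.norm_exp]
  simp [Complex.mul_re]

lemma lh_norm_exp_neg_mul_I (w : ℂ) : ‖Complex.exp (-(w * Complex.I))‖ = Real.exp w.im := by
  rw [Complex.norm_exp]
  simp [Complex.mul_re]

lemma lh_den_lb {r : ℝ} (w : ℂ) (hw : 0 ≤ (r:ℂ).re * w.im) :
    (Real.exp r - Real.exp (-r))/2 ≤ ‖Complex.sin ((r:ℂ)*(Complex.I + w))‖ := by
  have h1 : (r:ℂ)*(Complex.I + w) = (r:ℂ)*Complex.I + (r:ℂ)*w := by ring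
  rw [h1, lh_sin_shift]
  have h2 : ‖(Complex.exp (r:ℂ) * Complex.exp (-((r:ℂ)*w*Complex.I))
        - Complex.exp (-(r:ℂ)) * Complex.exp ((r:ℂ)*w*Complex.I)) * Complex.I / 2‖
      = ‖Complex.exp (r:ℂ) * Complex.exp (-((r:ℂ)*w*Complex.I))
        - Complex.exp (-(r:ℂ)) * Complex.exp ((r:ℂ)*w*Complex.I)‖ / 2 := by
    simp [norm_div, norm_mul]
  rw [h2]
  have him : ((r:ℂ)*w).im = r * w.im := by simp [Complex.mul_im]
  have hA : ‖Complex.exp (r:ℂ) * Complex.exp (-((r:ℂ)*w*Complex.I))‖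
      = Real.exp r * Real.exp (r*w.im) := by
    rw [norm_mul, lh_norm_exp_neg_mul_I, him]
    congr 1
    rw [Complex.norm_exp]; simp
  have hB : ‖Complex.exp (-(r:ℂ)) * Complex.exp ((r:ℂ)*w*Complex.I)‖
      = Real.exp (-r) * Real.exp (-(r*w.im)) := by
    rw [norm_mul, lh_norm_exp_mul_I, him]
    congr 1
    rw [Complex.norm_exp]; simp
  have key := norm_sub_norm_le (Complex.exp (r:ℂ) * Complex.exp (-((r:ℂ)*w*Complex.I)))
      (Complex.exp (-(r:ℂ)) * Complex.exp ((r:ℂ)*w*Complex.I))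
  rw [hA, hB] at key
  have hrw : 0 ≤ r * w.im := by simpa using hw
  have e1 : Real.exp r ≤ Real.exp r * Real.exp (r*w.im) := by
    nlinarith [Real.one_le_exp hrw, Real.exp_pos r]
  have e2 : Real.exp (-r) * Real.exp (-(r*w.im)) ≤ Real.exp (-r) := by
    nlinarith [Real.exp_pos (-r), Real.exp_le_one_iff.mpr (neg_nonpos.mpr hrw)]
  linarith

lemma lh_norm_sin_le {w : ℂ} (hw : ‖w‖ ≤ 1) : ‖Complex.sin w‖ ≤ 2 * ‖w‖ := by
  have h : Complex.sin w
      = ((Complex.exp (-w*Complex.I) - 1) - (Complex.exp (w*Complex.I) - 1)) * Complex.I / 2 := by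
    rw [Complex.sin]; ring
  rw [h]
  have h2 : ‖((Complex.exp (-w*Complex.I) - 1) - (Complex.exp (w*Complex.I) - 1)) * Complex.I / 2‖
      = ‖(Complex.exp (-w*Complex.I) - 1) - (Complex.exp (w*Complex.I) - 1)‖ / 2 := by
    simp [norm_div, norm_mul]
  rw [h2]
  have hb1 : ‖Complex.exp (-w*Complex.I) - 1‖ ≤ 2 * ‖w‖ := by
    have := Complex.norm_exp_sub_one_le (x := -w*Complex.I) (by simpa using hw)
    simpa using this
  have hb2 : ‖Complex.exp (w*Complex.I) - 1‖ ≤ 2 * ‖w‖ := by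
    have := Complex.norm_exp_sub_one_le (x := w*Complex.I) (by simpa using hw)
    simpa using this
  have := norm_sub_le (Complex.exp (-w*Complex.I) - 1) (Complex.exp (w*Complex.I) - 1)
  linarith

section summ

variable {a b : ℝ} {z : ℂ}

lemma lh_delta_pos (hb : 0 < b) :
    0 < (Real.exp (Real.pi * b⁻¹) - Real.exp (-(Real.pi * b⁻¹)))/2 := by
  have hc : 0 < Real.pi * b⁻¹ := mul_pos Real.pi_pos (inv_pos.mpr hb)
  have := Real.exp_lt_exp.mpr (neg_lt_self hc)
  linarith

lemma lh_den_norm (hb : 0 < b) {t : ℝ} (ht : 0 ≤ t) (hz : 0 ≤ z.im) :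
    (Real.exp (Real.pi * b⁻¹) - Real.exp (-(Real.pi * b⁻¹)))/2
      ≤ ‖Complex.sin ((↑(Real.pi * b⁻¹):ℂ) * (Complex.I + (t:ℂ)*z))‖ := by
  refine lh_den_lb ((t:ℂ)*z) ?_
  have h1 : ((t:ℂ)*z).im = t * z.im := by simp [Complex.mul_im]
  rw [h1, Complex.ofReal_re]
  have hc : 0 < Real.pi * b⁻¹ := mul_pos Real.pi_pos (inv_pos.mpr hb)
  positivity

lemma lh_den_ne (hb : 0 < b) {t : ℝ} (ht : 0 ≤ t) (hz : 0 ≤ z.im) :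
    Complex.sin ((↑(Real.pi * b⁻¹):ℂ) * (Complex.I + (t:ℂ)*z)) ≠ 0 := by
  have := lh_den_norm (z := z) hb ht hz
  have hδ := lh_delta_pos hb
  intro h0
  rw [h0] at this
  simp at this
  linarith

lemma lh_summable_logP (ha : 1 < a) (hb : 0 < b) (hz : 0 < z.im) :
    Summable fun k : ℕ => Complex.log (lhF b (a⁻¹^k) z) := by
  set c := Real.pi * b⁻¹ with hcdef
  have hc : 0 < c := mul_pos Real.pi_pos (inv_pos.mpr hb)
  set δ := (Real.exp c - Real.exp (-c))/2 with hδdef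
  have hδ : 0 < δ := lh_delta_pos hb
  set B := ‖Complex.cos ((c:ℂ)*Complex.I)‖ with hBdef
  have hB : 0 ≤ B := norm_nonneg _
  have hr0 : (0:ℝ) ≤ a⁻¹ := by positivity
  have hr1 : a⁻¹ < 1 := inv_lt_one_of_one_lt₀ ha
  have hten : Tendsto (fun k : ℕ => c * (a⁻¹^k * ‖z‖)) atTop (𝓝 0) := by
    have h := (tendsto_pow_atTop_nhds_zero_of_lt_one hr0 hr1).mul_const ‖z‖
    have h2 := h.const_mul c
    simpa using h2
  have ev1 : ∀ᶠ k : ℕ in atTop, c * (a⁻¹^k * ‖z‖) ≤ 1 :=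
    hten.eventually (eventually_le_nhds one_pos)
  have ev2 : ∀ᶠ k : ℕ in atTop, (4*B/δ) * (c * (a⁻¹^k * ‖z‖)) ≤ 1/2 := by
    have h2 := hten.const_mul (4*B/δ)
    simp only [mul_zero] at h2
    exact h2.eventually (eventually_le_nhds (by norm_num))
  refine Summable.of_norm_bounded_eventually_nat
    (g := fun k => (3/2) * ((4*B/δ) * (c * ‖z‖)) * a⁻¹^k) ?_ ?_
  · exact ((summable_geometric_of_lt_one hr0 hr1).mul_left _)
  · filter_upwards [ev1, ev2] with k h1 h2
    set t := a⁻¹^k with htdef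
    have ht0 : 0 ≤ t := pow_nonneg hr0 k
    have hden := lh_den_ne (z := z) hb ht0 hz.le
    have hdenn := lh_den_norm (z := z) hb ht0 hz.le
    have hwnorm : ‖(↑c * ((t:ℂ) * z) : ℂ)‖ = c * (t * ‖z‖) := by
      rw [norm_mul, norm_mul, Complex.norm_real, Complex.norm_real,
        Real.norm_eq_abs, Real.norm_eq_abs, _root_.abs_of_nonneg hc.le, _root_.abs_of_nonneg ht0]
    -- numerator minus denominator
    have hnd : Complex.sin ((↑c:ℂ) * (Complex.I - (t:ℂ)*z))
        - Complex.sin ((↑c:ℂ) * (Complex.I + (t:ℂ)*z))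
        = -(2 * Complex.sin ((↑c:ℂ) * ((t:ℂ)*z)) * Complex.cos ((↑c:ℂ)*Complex.I)) := by
      rw [Complex.sin_sub_sin]
      rw [show ((↑c:ℂ) * (Complex.I - (t:ℂ)*z) - (↑c:ℂ) * (Complex.I + (t:ℂ)*z))/2
          = -((↑c:ℂ) * ((t:ℂ)*z)) by ring]
      rw [show ((↑c:ℂ) * (Complex.I - (t:ℂ)*z) + (↑c:ℂ) * (Complex.I + (t:ℂ)*z))/2
          = (↑c:ℂ) * Complex.I by ring]
      rw [Complex.sin_neg]
      ring
    have hx : lhF b t z - 1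
        = (Complex.sin ((↑c:ℂ) * (Complex.I - (t:ℂ)*z))
            - Complex.sin ((↑c:ℂ) * (Complex.I + (t:ℂ)*z)))
          / Complex.sin ((↑c:ℂ) * (Complex.I + (t:ℂ)*z)) := by
      unfold lhF
      rw [← hcdef]
      exact div_sub_one hden
    have hsin_le : ‖Complex.sin ((↑c:ℂ) * ((t:ℂ)*z))‖ ≤ 2 * (c * (t * ‖z‖)) := by
      have := lh_norm_sin_le (w := (↑c:ℂ) * ((t:ℂ)*z)) (by rw [hwnorm]; exact h1.trans_eq rfl)
      rwa [hwnorm] at this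
    have hxb : ‖lhF b t z - 1‖ ≤ (4*B/δ) * (c * (t * ‖z‖)) := by
      rw [hx, norm_div, hnd]
      have hnum : ‖-(2 * Complex.sin ((↑c:ℂ) * ((t:ℂ)*z)) * Complex.cos ((↑c:ℂ)*Complex.I))‖
          = 2 * ‖Complex.sin ((↑c:ℂ) * ((t:ℂ)*z))‖ * B := by
        rw [norm_neg, norm_mul, norm_mul, Complex.norm_ofNat]
      rw [hnum]
      calc 2 * ‖Complex.sin ((↑c:ℂ) * ((t:ℂ)*z))‖ * B
            / ‖Complex.sin ((↑c:ℂ) * (Complex.I + (t:ℂ)*z))‖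
          ≤ 2 * (2 * (c * (t * ‖z‖))) * B / δ := by
            gcongr
        _ = (4*B/δ) * (c * (t * ‖z‖)) := by ring
    have hxhalf : ‖lhF b t z - 1‖ ≤ 1/2 := hxb.trans h2
    have hlog : Complex.log (lhF b t z) = Complex.log (1 + (lhF b t z - 1)) := by
      congr 1
      ring
    rw [hlog]
    calc ‖Complex.log (1 + (lhF b t z - 1))‖
        ≤ (3/2) * ‖lhF b t z - 1‖ := Complex.norm_log_one_add_half_le_self hxhalf
      _ ≤ (3/2) * ((4*B/δ) * (c * (t * ‖z‖))) := by gcongr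
      _ = (3/2) * ((4*B/δ) * (c * ‖z‖)) * a⁻¹^k := by rw [htdef]; ring

end summ

section summQ

variable {a b : ℝ} {z : ℂ}

lemma lh_summable_logQ (ha : 1 < a) (hb : 0 < b) (hz : 0 < z.im) :
    Summable fun m : ℕ => Complex.log (lhQ b (a^(m+1)) z) := by
  set c := Real.pi * b⁻¹ with hcdef
  have hc : 0 < c := mul_pos Real.pi_pos (inv_pos.mpr hb)
  set δ := (Real.exp c - Real.exp (-c))/2 with hδdef
  have hδ : 0 < δ := lh_delta_pos hb
  have ha0 : (0:ℝ) < a := lt_trans zero_lt_one ha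
  set E := Complex.exp (2*Real.pi/b) with hEdef
  have hEC : E * Complex.exp (-(c:ℂ)) = Complex.exp ((c:ℂ)) := by
    rw [hEdef, ← Complex.exp_add]
    congr 1
    rw [hcdef]
    push_cast
    have hbne : (b:ℂ) ≠ 0 := by exact_mod_cast hb.ne'
    field_simp
    ring
  set CE := ‖E * Complex.exp ((c:ℂ)) - Complex.exp (-(c:ℂ))‖ with hCEdef
  have hCE0 : 0 ≤ CE := norm_nonneg _
  set τ := Real.exp (-(c*(a-1)*z.im)) with hτdef
  have hτ0 : 0 ≤ τ := Real.exp_nonneg _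
  have hτ1 : τ < 1 := by
    rw [hτdef]
    apply Real.exp_lt_one_iff.mpr
    have : 0 < c*(a-1)*z.im := by
      apply mul_pos (mul_pos hc (by linarith)) hz
    linarith
  have ev : ∀ᶠ m : ℕ in atTop, ((CE/δ)*τ)*τ^m ≤ 1/2 := by
    have h := (tendsto_pow_atTop_nhds_zero_of_lt_one hτ0 hτ1).const_mul ((CE/δ)*τ)
    simp only [mul_zero] at h
    exact h.eventually (eventually_le_nhds (by norm_num))
  refine Summable.of_norm_bounded_eventually_nat
    (g := fun m => (3/2) * (((CE/δ)*τ)) * τ^m) ?_ ?_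
  · exact ((summable_geometric_of_lt_one hτ0 hτ1).mul_left _)
  · filter_upwards [ev] with m hm
    set t := a^(m+1) with htdef
    have ht0 : 0 < t := pow_pos ha0 _
    have hden := lh_den_ne (z := z) (t := t) hb ht0.le hz.le
    have hdenn := lh_den_norm (z := z) (t := t) hb ht0.le hz.le
    rw [← hcdef] at hden hdenn
    set W := (↑c:ℂ) * ((t:ℂ) * z) with hWdef
    have hWim : W.im = c * (t * z.im) := by
      rw [hWdef]
      simp [Complex.mul_im]
    have hnum : Complex.sin ((↑c:ℂ)*(Complex.I - (t:ℂ)*z))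
        = (Complex.exp (c:ℂ) * Complex.exp (W*Complex.I)
            - Complex.exp (-(c:ℂ)) * Complex.exp (-(W*Complex.I))) * Complex.I / 2 := by
      have h := lh_sin_shift c (-W)
      rw [show (↑c:ℂ)*Complex.I + -W = (↑c:ℂ)*(Complex.I - (t:ℂ)*z) by rw [hWdef]; ring] at h
      have e1 : -((-W)*Complex.I) = W*Complex.I := by ring
      have e2 : (-W)*Complex.I = -(W*Complex.I) := by ring
      rw [e1, e2] at h
      exact h
    have hden2 : Complex.sin ((↑c:ℂ)*(Complex.I + (t:ℂ)*z))
        = (Complex.exp (c:ℂ) * Complex.exp (-(W*Complex.I))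
            - Complex.exp (-(c:ℂ)) * Complex.exp (W*Complex.I)) * Complex.I / 2 := by
      have h := lh_sin_shift c W
      rw [show (↑c:ℂ)*Complex.I + W = (↑c:ℂ)*(Complex.I + (t:ℂ)*z) by rw [hWdef]; ring] at h
      exact h
    have hN : -(E * Complex.sin ((↑c:ℂ)*(Complex.I - (t:ℂ)*z)))
          - Complex.sin ((↑c:ℂ)*(Complex.I + (t:ℂ)*z))
        = -(Complex.I/2) * (E * Complex.exp ((c:ℂ)) - Complex.exp (-(c:ℂ)))
            * Complex.exp (W*Complex.I) := by
      rw [hnum, hden2]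
      linear_combination (Complex.I/2 * Complex.exp (-(W*Complex.I))) * hEC
    have hx : lhQ b t z - 1
        = (-(E * Complex.sin ((↑c:ℂ)*(Complex.I - (t:ℂ)*z)))
            - Complex.sin ((↑c:ℂ)*(Complex.I + (t:ℂ)*z)))
          / Complex.sin ((↑c:ℂ)*(Complex.I + (t:ℂ)*z)) := by
      unfold lhQ lhF
      rw [← hcdef, ← hEdef]
      field_simp
    have hNnorm : ‖-(Complex.I/2) * (E * Complex.exp ((c:ℂ)) - Complex.exp (-(c:ℂ)))
            * Complex.exp (W*Complex.I)‖ = (1/2) * CE * ‖Complex.exp (W*Complex.I)‖ := by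
      rw [norm_mul, norm_mul, norm_neg, hCEdef]
      norm_num
    have hexpW : ‖Complex.exp (W*Complex.I)‖ ≤ τ^(m+1) := by
      rw [lh_norm_exp_mul_I, hWim]
      have hber : 1 + ((m+1):ℕ) * (a-1) ≤ t := by
        rw [htdef]
        have := one_add_mul_le_pow (a := a - 1) (by linarith) (m+1)
        rw [show (1:ℝ) + (a-1) = a by ring] at this
        exact_mod_cast this
      have h1 : c*(a-1)*z.im * ((m+1):ℕ) ≤ c * (t * z.im) := by
        have h3 : ((m+1):ℕ) * (a-1) ≤ t := by linarith [hber]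
        have h2 := mul_le_mul_of_nonneg_left h3 (mul_pos hc hz).le
        nlinarith [h2]
      rw [hτdef, ← Real.exp_nat_mul]
      apply Real.exp_le_exp.mpr
      push_cast at h1 ⊢
      linarith
    have hxb : ‖lhQ b t z - 1‖ ≤ ((CE/δ)*τ)*τ^m := by
      rw [hx, norm_div, hN, hNnorm]
      calc (1/2) * CE * ‖Complex.exp (W*Complex.I)‖
            / ‖Complex.sin ((↑c:ℂ)*(Complex.I + (t:ℂ)*z))‖
          ≤ (1/2) * CE * τ^(m+1) / δ := by gcongr
        _ = (CE/δ*(τ*τ^m))/2 := by rw [pow_succ]; ring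
        _ ≤ CE/δ*(τ*τ^m) := half_le_self (by positivity)
        _ = ((CE/δ)*τ)*τ^m := by ring
    have hxhalf : ‖lhQ b t z - 1‖ ≤ 1/2 := hxb.trans hm
    have hlog : Complex.log (lhQ b t z) = Complex.log (1 + (lhQ b t z - 1)) := by
      congr 1
      ring
    rw [hlog]
    calc ‖Complex.log (1 + (lhQ b t z - 1))‖
        ≤ (3/2) * ‖lhQ b t z - 1‖ := Complex.norm_log_one_add_half_le_self hxhalf
      _ ≤ (3/2) * (((CE/δ)*τ)*τ^m) := by gcongr
      _ = (3/2) * ((CE/δ)*τ) * τ^m := by ring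

end summQ

lemma lh_hasProd_zero {f : ℕ → ℂ} (n : ℕ) (h : f n = 0) : HasProd f 0 := by
  have : ∀ᶠ s : Finset ℕ in Filter.atTop, ∏ i ∈ s, f i = 0 := by
    filter_upwards [Filter.eventually_ge_atTop {n}] with s hs
    exact Finset.prod_eq_zero (hs (Finset.mem_singleton_self n)) h
  exact (tendsto_const_nhds.congr' (this.mono fun s hs => hs.symm))

lemma lh_multipliable {f : ℕ → ℂ}
    (hlog : (∀ n, f n ≠ 0) → Summable fun n => Complex.log (f n)) : Multipliable f := by
  by_cases h : ∃ n, f n = 0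
  · obtain ⟨n, hn⟩ := h
    exact ⟨0, lh_hasProd_zero n hn⟩
  · push_neg at h
    have hs := hlog h
    refine ⟨Complex.exp (∑' n, Complex.log (f n)), ?_⟩
    have := hs.hasSum.cexp
    refine this.congr_fun fun n => ?_
    exact (Complex.exp_log (h n)).symm

lemma lh_tprod_zero_iff {f : ℕ → ℂ}
    (hlog : (∀ n, f n ≠ 0) → Summable fun n => Complex.log (f n)) :
    (∏' n, f n) = 0 ↔ ∃ n, f n = 0 := by
  constructor
  · intro h0
    by_contra h
    push_neg at h
    have hs := hlog h
    have hp : HasProd f (Complex.exp (∑' n, Complex.log (f n))) := by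
      have := hs.hasSum.cexp
      refine this.congr_fun fun n => ?_
      exact (Complex.exp_log (h n)).symm
    rw [hp.tprod_eq] at h0
    exact Complex.exp_ne_zero _ h0
  · rintro ⟨n, hn⟩
    exact (lh_hasProd_zero n hn).tprod_eq
lemma lh_num_zero_iff {b : ℝ} (hb : 0 < b) {t : ℝ} (ht : 0 < t) (z : ℂ) :
    Complex.sin ((↑(Real.pi * b⁻¹):ℂ) * (Complex.I - (t:ℂ)*z)) = 0 ↔
      ∃ n : ℤ, z = ((t⁻¹:ℝ):ℂ) * ((b:ℂ)*(n:ℂ) + Complex.I) := by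
  have hbne : (b:ℂ) ≠ 0 := by exact_mod_cast hb.ne'
  have htne : (t:ℂ) ≠ 0 := by exact_mod_cast ht.ne'
  have hpi : (Real.pi:ℂ) ≠ 0 := by exact_mod_cast Real.pi_ne_zero
  have hbinv : (b:ℂ) * (b:ℂ)⁻¹ = 1 := mul_inv_cancel₀ hbne
  rw [Complex.sin_eq_zero_iff]
  constructor
  · rintro ⟨n, hn⟩
    refine ⟨-n, ?_⟩
    push_cast at hn ⊢
    field_simp at hn
    have hn2 : Complex.I - (t:ℂ) * z = (n:ℂ) * (b:ℂ) :=
      hn.trans (by ring)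
    rw [inv_mul_eq_div, eq_div_iff htne]
    linear_combination -hn2
  · rintro ⟨n, hn⟩
    refine ⟨-n, ?_⟩
    push_cast at hn ⊢
    field_simp at hn
    linear_combination (-(Real.pi:ℂ)*(b:ℂ)⁻¹)*hn + (-(n:ℂ)*(Real.pi:ℂ))*hbinv

lemma lh_tP_eq (a : ℝ) (ha0 : (a:ℂ) ≠ 0) (k : ℕ) : ((a⁻¹^k : ℝ):ℂ) = (a:ℂ)^(-(k:ℤ)) := by
  push_cast
  rw [zpow_neg, zpow_natCast, inv_pow]

lemma lh_tQ_eq (a : ℝ) (m : ℕ) : ((a^(m+1) : ℝ):ℂ) = (a:ℂ)^((m:ℤ)+1) := by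
  push_cast
  rw [show ((m:ℤ)+1) = ((m+1:ℕ):ℤ) by push_cast; ring, zpow_natCast]

lemma lh_latticeH_eq (a b : ℝ) (ha : 1 < a) (z : ℂ) :
    latticeH a b z = (∏' k:ℕ, lhF b (a⁻¹^k) z) * (∏' m:ℕ, lhQ b (a^(m+1)) z) := by
  have ha0 : (a:ℂ) ≠ 0 := by
    exact_mod_cast (lt_trans zero_lt_one ha).ne'
  unfold latticeH
  congr 1
  · refine tprod_congr fun k => ?_
    have hk : (a:ℂ)^(-(k:ℤ)) * (a:ℂ)^(k:ℤ) = 1 := by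
      rw [← zpow_add₀ ha0]; simp
    unfold lhF
    rw [lh_tP_eq a ha0]
    congr 2
    · push_cast
      linear_combination ((Real.pi:ℂ) * (b:ℂ)⁻¹ * Complex.I) * hk
    · push_cast
      linear_combination ((Real.pi:ℂ) * (b:ℂ)⁻¹ * Complex.I) * hk
  · refine tprod_congr fun m => ?_
    have hk : (a:ℂ)^((m:ℤ)+1) * (a:ℂ)^(-((m:ℤ)+1)) = 1 := by
      rw [← zpow_add₀ ha0, show ((m:ℤ)+1) + (-((m:ℤ)+1)) = 0 by ring, zpow_zero]
    unfold lhQ lhF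
    rw [lh_tQ_eq a m]
    rw [show (↑(Real.pi * b⁻¹):ℂ) * (Complex.I - (a:ℂ)^((m:ℤ)+1)*z)
        = -(Real.pi * b⁻¹ * (a:ℂ)^((m:ℤ)+1) * (z - Complex.I*(a:ℂ)^(-((m:ℤ)+1)))) by
      push_cast
      linear_combination (-(Real.pi:ℂ) * (b:ℂ)⁻¹ * Complex.I) * hk]
    rw [Complex.sin_neg]
    rw [show (↑(Real.pi * b⁻¹):ℂ) * (Complex.I + (a:ℂ)^((m:ℤ)+1)*z)
        = Real.pi * b⁻¹ * (a:ℂ)^((m:ℤ)+1) * (z + Complex.I*(a:ℂ)^(-((m:ℤ)+1))) by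
      push_cast
      linear_combination (-(Real.pi:ℂ) * (b:ℂ)⁻¹ * Complex.I) * hk]
    ring

section zeros

variable {a b : ℝ} {z : ℂ}

lemma lh_multP (ha : 1 < a) (hb : 0 < b) (hz : 0 < z.im) :
    Multipliable (fun k : ℕ => lhF b (a⁻¹^k) z) :=
  lh_multipliable fun _ => lh_summable_logP ha hb hz

lemma lh_multQ (ha : 1 < a) (hb : 0 < b) (hz : 0 < z.im) :
    Multipliable (fun m : ℕ => lhQ b (a^(m+1)) z) :=
  lh_multipliable fun _ => lh_summable_logQ ha hb hz

lemma lh_multQS (ha : 1 < a) (hb : 0 < b) (hz : 0 < z.im) :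
    Multipliable (fun m : ℕ => lhQ b (a^(m+1+1)) z) := by
  apply lh_multipliable
  intro _
  exact (summable_nat_add_iff (f := fun m : ℕ => Complex.log (lhQ b (a^(m+1)) z)) 1).2
    (lh_summable_logQ ha hb hz)

lemma lh_factor_zero_P_iff (ha : 1 < a) (hb : 0 < b) (hz : 0 < z.im) (k : ℕ) :
    lhF b (a⁻¹^k) z = 0 ↔ ∃ n : ℤ, z = (a:ℂ)^(k:ℤ) * ((b:ℂ)*(n:ℂ) + Complex.I) := by
  have ha0 : (0:ℝ) < a := lt_trans zero_lt_one ha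
  have ht0 : (0:ℝ) < a⁻¹^k := pow_pos (by positivity) k
  have hden := lh_den_ne (z := z) (t := a⁻¹^k) hb ht0.le hz.le
  unfold lhF
  rw [div_eq_zero_iff, or_iff_left hden, lh_num_zero_iff hb ht0 z]
  have hcast : (((a⁻¹^k)⁻¹ : ℝ) : ℂ) = (a:ℂ)^(k:ℤ) := by
    rw [inv_pow, inv_inv, zpow_natCast]
    push_cast
    ring
  rw [hcast]

lemma lh_factor_zero_Q_iff (ha : 1 < a) (hb : 0 < b) (hz : 0 < z.im) (m : ℕ) :
    lhQ b (a^(m+1)) z = 0 ↔ ∃ n : ℤ, z = (a:ℂ)^(-((m:ℤ)+1)) * ((b:ℂ)*(n:ℂ) + Complex.I) := by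
  have ha0 : (0:ℝ) < a := lt_trans zero_lt_one ha
  have ht0 : (0:ℝ) < a^(m+1) := pow_pos ha0 _
  have hden := lh_den_ne (z := z) (t := a^(m+1)) hb ht0.le hz.le
  unfold lhQ lhF
  rw [neg_eq_zero, mul_eq_zero, or_iff_right (Complex.exp_ne_zero _),
    div_eq_zero_iff, or_iff_left hden, lh_num_zero_iff hb ht0 z]
  have hcast : (((a^(m+1))⁻¹ : ℝ) : ℂ) = (a:ℂ)^(-((m:ℤ)+1)) := by
    rw [zpow_neg, show ((m:ℤ)+1) = ((m+1:ℕ):ℤ) by push_cast; ring, zpow_natCast]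
    push_cast
    ring
  rw [hcast]

lemma lh_zero_iff (ha : 1 < a) (hb : 0 < b) (hz : 0 < z.im) :
    latticeH a b z = 0 ↔ ∃ m k : ℤ, z = (a : ℂ) ^ m * ((b:ℂ) * (k:ℂ) + Complex.I) := by
  rw [lh_latticeH_eq a b ha z, mul_eq_zero,
    lh_tprod_zero_iff (fun _ => lh_summable_logP ha hb hz),
    lh_tprod_zero_iff (fun _ => lh_summable_logQ ha hb hz)]
  constructor
  · rintro (⟨k, hk⟩ | ⟨m, hm⟩)
    · obtain ⟨n, hn⟩ := (lh_factor_zero_P_iff ha hb hz k).mp hk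
      exact ⟨(k:ℤ), n, hn⟩
    · obtain ⟨n, hn⟩ := (lh_factor_zero_Q_iff ha hb hz m).mp hm
      exact ⟨-((m:ℤ)+1), n, hn⟩
  · rintro ⟨M, n, hn⟩
    by_cases hM : 0 ≤ M
    · left
      refine ⟨M.toNat, (lh_factor_zero_P_iff ha hb hz M.toNat).mpr ⟨n, ?_⟩⟩
      rw [hn]
      congr 1
      rw [Int.toNat_of_nonneg hM]
    · right
      refine ⟨(-M-1).toNat, (lh_factor_zero_Q_iff ha hb hz (-M-1).toNat).mpr ⟨n, ?_⟩⟩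
      rw [hn]
      congr 1
      rw [Int.toNat_of_nonneg (by omega : (0:ℤ) ≤ -M-1)]
      ring_nf

end zeros

section quasi

variable {a b : ℝ} {z : ℂ}

lemma lh_quasi (ha : 1 < a) (hb : 0 < b) (hz : 0 < z.im) :
    latticeH a b ((a:ℂ)*z) = -Complex.exp (-(2*Real.pi/b)) * latticeH a b z := by
  have ha0 : (0:ℝ) < a := lt_trans zero_lt_one ha
  have hane : a ≠ 0 := ha0.ne'
  rw [lh_latticeH_eq a b ha ((a:ℂ)*z), lh_latticeH_eq a b ha z]
  have hPfac : ∀ k : ℕ, lhF b (a⁻¹^k) ((a:ℂ)*z) = lhF b (a⁻¹^k*a) z := by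
    intro k
    have h1 : (↑(a⁻¹^k):ℂ) * ((a:ℂ)*z) = (↑(a⁻¹^k*a):ℂ) * z := by push_cast; ring
    unfold lhF
    rw [h1]
  have hQfac : ∀ m : ℕ, lhQ b (a^(m+1)) ((a:ℂ)*z) = lhQ b (a^(m+1+1)) z := by
    intro m
    have h1 : (↑(a^(m+1)):ℂ) * ((a:ℂ)*z) = (↑(a^(m+1+1)):ℂ) * z := by push_cast; ring
    unfold lhQ lhF
    rw [h1]
  rw [tprod_congr hPfac, tprod_congr hQfac]
  have hgtail : ∀ k : ℕ, lhF b (a⁻¹^(k+1)*a) z = lhF b (a⁻¹^k) z := by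
    intro k
    have h2 : a⁻¹^(k+1)*a = a⁻¹^k := by
      rw [pow_succ, mul_assoc, inv_mul_cancel₀ hane, mul_one]
    rw [h2]
  have hmultg : Multipliable (fun k : ℕ => lhF b (a⁻¹^(k+1)*a) z) :=
    (lh_multP ha hb hz).congr fun k => (hgtail k).symm
  have hP : (∏' k:ℕ, lhF b (a⁻¹^k*a) z)
      = lhF b (a⁻¹^0*a) z * ∏' k:ℕ, lhF b (a⁻¹^(k+1)*a) z :=
    tprod_eq_zero_mul' hmultg
  rw [hP, tprod_congr hgtail]
  have h00 : lhF b (a⁻¹^0*a) z = lhF b a z := by norm_num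
  rw [h00]
  have hQ : (∏' m:ℕ, lhQ b (a^(m+1)) z)
      = lhQ b (a^(0+1)) z * ∏' m:ℕ, lhQ b (a^(m+1+1)) z :=
    tprod_eq_zero_mul' (lh_multQS ha hb hz)
  rw [hQ]
  have h01 : lhQ b (a^(0+1)) z = lhQ b a z := by norm_num
  rw [h01]
  have hlq : lhQ b a z = -(Complex.exp (2*Real.pi/b) * lhF b a z) := rfl
  rw [hlq]
  have hEE : Complex.exp (-(2*(Real.pi:ℂ)/(b:ℂ))) * Complex.exp (2*(Real.pi:ℂ)/(b:ℂ)) = 1 := by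
    rw [← Complex.exp_add]
    simp
  linear_combination (-(lhF b a z * (∏' k:ℕ, lhF b (a⁻¹^k) z)
    * (∏' m:ℕ, lhQ b (a^(m+1+1)) z))) * hEE

end quasi


/-- `h` vanishes exactly on the hyperbolic lattice `Γ(a,b) = {aᵐ(bk+i)}` and satisfies the
quasi-periodicity `h(az) = -e^{-2π/b} h(z)`. -/
theorem stmt18 (a b : ℝ) (ha : 1 < a) (hb : 0 < b) :
    (∀ z : ℂ, 0 < z.im →
      (latticeH a b z = 0 ↔ ∃ m k : ℤ, z = (a : ℂ) ^ m * (b * k + Complex.I))) ∧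
    (∀ z : ℂ, 0 < z.im → latticeH a b ((a : ℂ) * z) = -Complex.exp (-(2 * Real.pi / b)) * latticeH a b z) := by
  constructor
  · intro z hz
    exact lh_zero_iff ha hb hz
  · intro z hz
    exact lh_quasi ha hb hz
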